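/- For all s, t ∈ μ_r and v, w ∈ A_r: y ⋄_s (v z_t^δ w) = (y ⋄_s v) z_t^δ w + v z_t^δ (y ⋄_s w) + v z_t^δ (z_s^δ − z_t^δ) w. -/

import Mathlib

open FreeAlgebra

/-- Alphabet of `A_1 = ℚ⟨x,y⟩`. -/
inductive LetA : Type | x : LetA | y : LetA

/-- Alphabet of `A_r = ℚ⟨x, y_s : s ∈ μ_r⟩`; the group `G` plays the role of `μ_r`. -/
inductive LetR (G : Type) : Type | x : LetR G | y : G → LetR G

/-- `A_1 = ℚ⟨x, y⟩`. -/
abbrev A1 : Type := FreeAlgebra ℚ LetA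

/-- `A_r = ℚ⟨x, y_s : s ∈ μ_r⟩`. -/
abbrev Ar (G : Type) : Type := FreeAlgebra ℚ (LetR G)

noncomputable def X1 : A1 := ι ℚ LetA.x
noncomputable def Y1 : A1 := ι ℚ LetA.y

variable {G : Type} [CommGroup G]

noncomputable def Xr : Ar G := ι ℚ LetR.x
noncomputable def Yr (s : G) : Ar G := ι ℚ (LetR.y s)

/-- `z = x + y_1`. -/
noncomputable def zet : Ar G := Xr + Yr 1

open scoped Classical in
/-- `z_s^δ = x + δ(s) y_s` with `δ(1) = 0`, `δ(s) = 1` otherwise. -/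
noncomputable def zdel (s : G) : Ar G := if s = 1 then Xr else Xr + Yr s

/-- The involutive automorphism `φ` of `A_r`: `φ(x) = z`, `φ(y_s) = z_s^δ - z`. -/
noncomputable def phi : Ar G →ₐ[ℚ] Ar G :=
  lift ℚ (fun l => match l with
    | LetR.x => zet
    | LetR.y s => zdel s - zet)

/-- The natural embedding `A_1 → A_r`, `x ↦ x`, `y ↦ y_1`. -/
noncomputable def jm : A1 →ₐ[ℚ] Ar G :=
  lift ℚ (fun l => match l with
    | LetA.x => Xr
    | LetA.y => Yr 1)

open scoped Classical in
/-- The anti-automorphism `τ` of `A_r`: `τ(x) = y_1`, `τ(y_1) = x`, `τ(y_s) = -y_s` (`s ≠ 1`). -/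
noncomputable def tauR : Ar G →ₗ[ℚ] Ar G :=
  (MulOpposite.opLinearEquiv ℚ).symm.toLinearMap ∘ₗ
    (lift ℚ (fun l => match l with
      | LetR.x => MulOpposite.op (Yr 1)
      | LetR.y s => MulOpposite.op (if s = 1 then Xr else -(Yr s)) ) :
        Ar G →ₐ[ℚ] (Ar G)ᵐᵒᵖ).toLinearMap

/-- The anti-automorphism `τ` of `A_1`: `τ(x) = y`, `τ(y) = x`. -/
noncomputable def tau1 : A1 →ₗ[ℚ] A1 :=
  (MulOpposite.opLinearEquiv ℚ).symm.toLinearMap ∘ₗ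
    (lift ℚ (fun l => match l with
      | LetA.x => MulOpposite.op Y1
      | LetA.y => MulOpposite.op X1) : A1 →ₐ[ℚ] A1ᵐᵒᵖ).toLinearMap

/-- `wordP [(a₁,s₁),...,(a_l,s_l)] = x^{a₁} y_{s₁} ⋯ x^{a_l} y_{s_l}`,
i.e. the word `z_{a₁+1, s₁} ⋯ z_{a_l+1, s_l}`. -/
noncomputable def wordP (L : List (ℕ × G)) : Ar G :=
  (L.map (fun p => Xr ^ p.1 * Yr p.2)).prod

/-- Cumulative-product reindexing of subscripts: this realizes the composition `I ∘ M_s`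
on subscript lists, sending `(s₁, s₂, …, s_l)` to `(s s₁, s s₁ s₂, …, s s₁ ⋯ s_l)`. -/
def cumul : G → List (ℕ × G) → List (ℕ × G)
  | _, [] => []
  | g, p :: L => (p.1, g * p.2) :: cumul (g * p.2) L

/-- All the data entering the definition of the diamond products `⋄_s`:
the harmonic product `*`, the maps `ψ_s = φ ∘ I ∘ M_s`, and the family of
`ℚ`-bilinear diamond products `D s : A_1 × A_r → A_r` (together with the
corestriction `D1` of `⋄_1` to `A_1 × A_1 → A_1`), each characterized by its
defining recursive rules. -/
structure DiamondSetup (G : Type) [CommGroup G] where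
  /-- the harmonic product -/
  hst : Ar G →ₗ[ℚ] Ar G →ₗ[ℚ] Ar G
  one_hst : ∀ w, hst 1 w = w
  hst_one : ∀ v, hst v 1 = v
  hst_xr : ∀ v w, hst (v * Xr) w = hst v w * Xr
  hst_xl : ∀ v w, hst v (w * Xr) = hst v w * Xr
  hst_yy : ∀ (v w : Ar G) (s t : G), hst (v * Yr s) (w * Yr t) =
      hst v (w * Yr t) * Yr s + hst (v * Yr s) w * Yr t + hst v w * (Xr * Yr (s * t))
  /-- the linear automorphisms `ψ_s = φ ∘ I ∘ M_s` -/
  psi : G → (Ar G ≃ₗ[ℚ] Ar G)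
  psi_spec : ∀ (s : G) (L : List (ℕ × G)) (a : ℕ),
      psi s (wordP L * Xr ^ a) = phi (wordP (cumul s L) * Xr ^ a)
  /-- the diamond products `⋄_s : A_1 × A_r → A_r` -/
  D : G → A1 →ₗ[ℚ] Ar G →ₗ[ℚ] Ar G
  one_D : ∀ (s : G) (w : Ar G), D s 1 w = w
  D_one : ∀ (s : G) (v : A1), D s v 1 = psi s (phi (jm v))
  Dxx : ∀ (s : G) (v : A1) (w : Ar G), D s (v * X1) (w * Xr) =
      D s v (w * Xr) * Xr - D s (v * Y1) w * Xr
  Dyx : ∀ (s : G) (v : A1) (w : Ar G), D s (v * Y1) (w * Xr) =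
      D s v (w * Xr) * Yr 1 + D s (v * Y1) w * Xr
  Dxy : ∀ (s : G) (v : A1) (w : Ar G), D s (v * X1) (w * Yr 1) =
      D s v (w * Yr 1) * Xr + D s (v * X1) w * Yr 1
  Dyy : ∀ (s : G) (v : A1) (w : Ar G), D s (v * Y1) (w * Yr 1) =
      D s v (w * Yr 1) * Yr 1 - D s (v * X1) w * Yr 1
  Dxyt : ∀ (s t : G), t ≠ 1 → ∀ (v : A1) (w : Ar G), D s (v * X1) (w * Yr t) =
      D s v (w * Yr t) * Xr + D s v (w * (Xr + Yr t)) * Yr t - D s (v * Y1) w * Yr t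
  Dyyt : ∀ (s t : G), t ≠ 1 → ∀ (v : A1) (w : Ar G), D s (v * Y1) (w * Yr t) =
      D s v (w * Yr t) * Yr 1 - D s v (w * (Xr + Yr t)) * Yr t + D s (v * Y1) w * Yr t
  /-- `⋄_1` as a product `A_1 × A_1 → A_1` -/
  D1 : A1 →ₗ[ℚ] A1 →ₗ[ℚ] A1
  D1_spec : ∀ u v : A1, jm (D1 u v) = D 1 u (jm v)


/-! Write `F w = y ⋄_s w`. Specialising the defining rules to `v = 1`, and using
`x ⋄_s w + y ⋄_s w = w z` (both sides agree on `1` and on every `u ℓ`, `ℓ` a letter), one finds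
`F (u ℓ) = F u ℓ + u ρ(ℓ)` with `ρ(ℓ)` independent of `u`. This forces
`F (u w) = F u w + u (F w - F 1 w)` for all `u, w`, where `F 1 = z - z_s^δ`; the identity is the
case `u = v z_t^δ`, expanded once more by the letter rules for `z_t^δ`. -/

namespace FreeAlgebra

variable {R X : Type*} [CommRing R]

/-- Every element of the free algebra is a combination of `1` and of words `u * ι R x`. -/
theorem linearMap_ext_of_mul_ι {M : Type*} [AddCommGroup M] [Module R M]
    {f g : FreeAlgebra R X →ₗ[R] M} (h1 : f 1 = g 1)
    (hι : ∀ u x, f (u * ι R x) = g (u * ι R x)) : f = g := by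
  rw [← sub_eq_zero]
  set d := f - g
  have key : ∀ w u, d (u * w) = algebraMapInv w • d u := by
    intro w
    induction w using FreeAlgebra.induction with
    | grade0 r =>
      intro u
      rw [← Algebra.commutes, ← Algebra.smul_def, map_smul, AlgHom.commutes,
        Algebra.algebraMap_self_apply]
    | grade1 x =>
      intro u
      simp [d, hι, algebraMapInv]
    | mul a b iha ihb =>
      intro u
      rw [← mul_assoc, ihb, iha, smul_smul, mul_comm, map_mul]
    | add a b iha ihb =>
      intro u
      rw [mul_add, map_add, iha, ihb, map_add, add_smul]
  ext w
  simpa [d, h1] using key w 1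

theorem map_mul_of_map_mul_ι (F : FreeAlgebra R X →ₗ[R] FreeAlgebra R X)
    (ρ : X → FreeAlgebra R X) (h : ∀ u x, F (u * ι R x) = F u * ι R x + u * ρ x)
    (u w : FreeAlgebra R X) : F (u * w) = F u * w + u * (F w - F 1 * w) := by
  induction w using FreeAlgebra.induction generalizing u with
  | grade0 r =>
    simp only [Algebra.algebraMap_eq_smul_one, mul_smul_comm, mul_one, map_smul, sub_self,
      mul_zero, add_zero]
  | grade1 x =>
    have h1 := h 1 x
    rw [one_mul, one_mul] at h1
    rw [h, h1]
    noncomm_ring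
  | mul a b iha ihb =>
    have hab : F (a * b) = F a * b + a * (F b - F 1 * b) := ihb a
    rw [← mul_assoc, ihb, iha, hab]
    noncomm_ring
  | add a b iha ihb =>
    rw [mul_add, map_add, iha, ihb, map_add]
    noncomm_ring

end FreeAlgebra

section Diamond

variable {G : Type} [CommGroup G]

@[simp] lemma jm_X1 : jm (G := G) X1 = Xr := lift_ι_apply _ _

@[simp] lemma jm_Y1 : jm (G := G) Y1 = Yr 1 := lift_ι_apply _ _

@[simp] lemma phi_Xr : phi (G := G) Xr = zet := lift_ι_apply _ _

@[simp] lemma phi_Yr (t : G) : phi (Yr t) = zdel t - zet := lift_ι_apply _ _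

lemma zdel_one : zdel (1 : G) = Xr := if_pos rfl

lemma zdel_of_ne_one {t : G} (ht : t ≠ 1) : zdel t = Xr + Yr t := if_neg ht

variable (S : DiamondSetup G) (s : G)

namespace DiamondSetup

lemma psi_Xr : S.psi s Xr = zet := by
  simpa [wordP, cumul] using S.psi_spec s [] 1

lemma psi_Yr_one : S.psi s (Yr 1) = zdel s - zet := by
  simpa [wordP, cumul] using S.psi_spec s [(0, 1)] 0

lemma D_X1_one : S.D s X1 1 = zdel s := by
  rw [S.D_one, jm_X1, phi_Xr, zet, map_add, psi_Xr, psi_Yr_one]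
  abel

lemma D_Y1_one : S.D s Y1 1 = zet - zdel s := by
  have h : zdel (1 : G) - zet = -Yr 1 := by
    rw [zdel_one, zet]
    abel
  rw [S.D_one, jm_Y1, phi_Yr, h, map_neg, psi_Yr_one, neg_sub]

lemma D_X1_add_D_Y1 (w : Ar G) : S.D s X1 w + S.D s Y1 w = w * zet := by
  suffices S.D s X1 + S.D s Y1 = LinearMap.mulRight ℚ zet from LinearMap.congr_fun this w
  refine linearMap_ext_of_mul_ι ?_ fun u l ↦ ?_
  · simp [D_X1_one, D_Y1_one]
  simp only [LinearMap.add_apply, LinearMap.mulRight_apply]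
  rcases l with _ | t
  · have hx := S.Dxx s 1 u
    have hy := S.Dyx s 1 u
    simp only [one_mul, S.one_D] at hx hy
    rw [show ι ℚ LetR.x = (Xr : Ar G) from rfl, hx, hy, zet]
    noncomm_ring
  by_cases ht : t = 1
  · subst ht
    have hx := S.Dxy s 1 u
    have hy := S.Dyy s 1 u
    simp only [one_mul, S.one_D] at hx hy
    rw [show ι ℚ (LetR.y 1) = (Yr 1 : Ar G) from rfl, hx, hy, zet]
    noncomm_ring
  · have hx := S.Dxyt s t ht 1 u
    have hy := S.Dyyt s t ht 1 u
    simp only [one_mul, S.one_D] at hx hy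
    rw [show ι ℚ (LetR.y t) = (Yr t : Ar G) from rfl, hx, hy, zet]
    noncomm_ring

lemma D_Y1_mul_Xr (u : Ar G) : S.D s Y1 (u * Xr) = S.D s Y1 u * Xr + u * (Xr * Yr 1) := by
  have h := S.Dyx s 1 u
  simp only [one_mul, S.one_D] at h
  rw [h]
  noncomm_ring

lemma D_Y1_mul_Yr_one (u : Ar G) :
    S.D s Y1 (u * Yr 1) = S.D s Y1 u * Yr 1 + u * -(Xr * Yr 1) := by
  have h := S.Dyy s 1 u
  simp only [one_mul, S.one_D] at h
  rw [h, ← add_sub_cancel_right (S.D s X1 u) (S.D s Y1 u), D_X1_add_D_Y1, zet]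
  noncomm_ring

lemma D_Y1_mul_Yr {t : G} (ht : t ≠ 1) (u : Ar G) :
    S.D s Y1 (u * Yr t) = S.D s Y1 u * Yr t + u * (Yr t * Yr 1 - (Xr + Yr t) * Yr t) := by
  have h := S.Dyyt s t ht 1 u
  simp only [one_mul, S.one_D] at h
  rw [h]
  noncomm_ring

lemma exists_D_Y1_mul_ι (l : LetR G) :
    ∃ r, ∀ u, S.D s Y1 (u * ι ℚ l) = S.D s Y1 u * ι ℚ l + u * r := by
  rcases l with _ | t
  · exact ⟨_, D_Y1_mul_Xr S s⟩
  by_cases ht : t = 1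
  · subst ht
    exact ⟨_, D_Y1_mul_Yr_one S s⟩
  · exact ⟨_, D_Y1_mul_Yr S s ht⟩

lemma D_Y1_mul (u w : Ar G) :
    S.D s Y1 (u * w) = S.D s Y1 u * w + u * (S.D s Y1 w - (zet - zdel s) * w) := by
  choose ρ hρ using exists_D_Y1_mul_ι S s
  rw [← D_Y1_one]
  exact map_mul_of_map_mul_ι (S.D s Y1) ρ (fun u l ↦ hρ l u) u w

lemma D_Y1_mul_zdel (t : G) (v : Ar G) :
    S.D s Y1 (v * zdel t) = S.D s Y1 v * zdel t + v * zdel t * (zet - zdel t) := by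
  by_cases ht : t = 1
  · subst ht
    rw [zdel_one, D_Y1_mul_Xr, zet]
    noncomm_ring
  · rw [zdel_of_ne_one ht, mul_add, map_add, D_Y1_mul_Xr, D_Y1_mul_Yr S s ht, zet]
    noncomm_ring

end DiamondSetup

end Diamond

/-- For all `s, t ∈ μ_r` and `v, w ∈ A_r`:
`y ⋄_s (v z_t^δ w) = (y ⋄_s v) z_t^δ w + v z_t^δ (y ⋄_s w) + v z_t^δ (z_s^δ − z_t^δ) w`. -/
theorem statement6 {G : Type} [CommGroup G] (S : DiamondSetup G)
    (s t : G) (v w : Ar G) :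
    S.D s Y1 (v * zdel t * w) =
      S.D s Y1 v * zdel t * w + v * zdel t * S.D s Y1 w
        + v * zdel t * (zdel s - zdel t) * w := by
  rw [S.D_Y1_mul s (v * zdel t) w, S.D_Y1_mul_zdel s t v]
  noncomm_ring
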